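/- arXiv:2407.06539 — 4 statements merged into one kernel-verified Lean document; each statement's English description precedes it below -/
import Mathlib

section
/- Let f0 and f1 be probability density functions on the interval (0,1), both strictly positive on (0,1), such that the likelihood ratio r ↦ f1(r)/f0(r) is non-decreasing on (0,1). Let R0 and R1 be random variables with densities f0 and f1 respectively, and let t0, t1 ∈ [0,1) be thresholds. If Pr(R0 ≥ t0) > Pr(R1 ≥ t1) (the decision rate for group 1 is lower) and E[R0 | R0 ≥ t0] < E[R1 | R1 ≥ t1] (the outcome rate for group 1 is higher), then t0 < t1. -/
open MeasureTheory Set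

/-! Under the monotone likelihood ratio property, `R₁` first-order stochastically dominates `R₀`:
`Pr(R₀ ≥ t) ≤ Pr(R₁ ≥ t)` for every `t`. Indeed, if `f₁ > f₀` somewhere below `t`, the ratio
exceeds `1` on the whole tail above `t`; otherwise `f₁ ≤ f₀` below `t`, and the tails compare
because both densities have total mass `1`. If `t₁ ≤ t₀`, then
`Pr(R₁ ≥ t₁) ≥ Pr(R₁ ≥ t₀) ≥ Pr(R₀ ≥ t₀)`, contradicting the lower decision rate of group 1. -/

section StochasticDominance

variable {α : Type*} [LinearOrder α]

theorem le_on_inter_Ici_or_le_on_diff_Ici {S : Set α} {f g : α → ℝ} (t : α)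
    (hf : ∀ r ∈ S, 0 < f r) (hmono : MonotoneOn (fun r => g r / f r) S) :
    (∀ r ∈ S ∩ Ici t, f r ≤ g r) ∨ ∀ r ∈ S \ Ici t, g r ≤ f r := by
  refine or_iff_not_imp_right.mpr fun hhead => ?_
  obtain ⟨s, hsS, hst, hfg⟩ : ∃ s ∈ S, s < t ∧ f s < g s := by simpa using hhead
  rintro r ⟨hrS, htr⟩
  have hsr : s ≤ r := hst.le.trans htr
  have hratio : 1 < g r / f r :=
    ((one_lt_div (hf s hsS)).mpr hfg).trans_le (hmono hsS hrS hsr)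
  exact ((one_lt_div (hf r hrS)).mp hratio).le

variable [TopologicalSpace α] [ClosedIciTopology α] [MeasurableSpace α] [OpensMeasurableSpace α]

theorem setIntegral_inter_Ici_le_of_monotoneOn_div {μ : Measure α} {S : Set α} {f g : α → ℝ}
    (t : α) (hS : MeasurableSet S) (hfi : IntegrableOn f S μ) (hgi : IntegrableOn g S μ)
    (hfg : ∫ r in S, f r ∂μ = ∫ r in S, g r ∂μ)
    (hf : ∀ r ∈ S, 0 < f r) (hmono : MonotoneOn (fun r => g r / f r) S) :
    ∫ r in S ∩ Ici t, f r ∂μ ≤ ∫ r in S ∩ Ici t, g r ∂μ := by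
  rcases le_on_inter_Ici_or_le_on_diff_Ici t hf hmono with htail | hhead
  · exact setIntegral_mono_on (hfi.mono_set inter_subset_left) (hgi.mono_set inter_subset_left)
      (hS.inter measurableSet_Ici) htail
  · have hhead_integral : ∫ r in S \ Ici t, g r ∂μ ≤ ∫ r in S \ Ici t, f r ∂μ :=
      setIntegral_mono_on (hgi.mono_set sdiff_subset) (hfi.mono_set sdiff_subset)
        (hS.diff measurableSet_Ici) hhead
    have hsplit_f := integral_inter_add_sdiff measurableSet_Ici hfi (t := Ici t)
    have hsplit_g := integral_inter_add_sdiff measurableSet_Ici hgi (t := Ici t)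
    linarith

end StochasticDominance

theorem robust_outcome_test_simple_general
    (f0 f1 : ℝ → ℝ) (t0 t1 : ℝ)
    (hf0pos : ∀ r ∈ Ioo (0:ℝ) 1, 0 < f0 r)
    (hf1pos : ∀ r ∈ Ioo (0:ℝ) 1, 0 < f1 r)
    (hf0pdf : (∫ r in Ioo (0:ℝ) 1, f0 r) = 1)
    (hf1pdf : (∫ r in Ioo (0:ℝ) 1, f1 r) = 1)
    (hmlr : MonotoneOn (fun r => f1 r / f0 r) (Ioo (0:ℝ) 1))
    -- benchmark test: group 1's decision rate is lower
    (hDR : (∫ r in Ioo (0:ℝ) 1 ∩ Ici t1, f1 r) < ∫ r in Ioo (0:ℝ) 1 ∩ Ici t0, f0 r) :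
    t0 < t1 := by
  refine lt_of_not_ge fun h10 => hDR.not_ge ?_
  have hi0 : IntegrableOn f0 (Ioo (0:ℝ) 1) := Integrable.of_integral_ne_zero (by simp [hf0pdf])
  have hi1 : IntegrableOn f1 (Ioo (0:ℝ) 1) := Integrable.of_integral_ne_zero (by simp [hf1pdf])
  calc ∫ r in Ioo (0:ℝ) 1 ∩ Ici t0, f0 r
      ≤ ∫ r in Ioo (0:ℝ) 1 ∩ Ici t0, f1 r :=
        setIntegral_inter_Ici_le_of_monotoneOn_div t0 measurableSet_Ioo hi0 hi1
          (hf0pdf.trans hf1pdf.symm) hf0pos hmlr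
    _ ≤ ∫ r in Ioo (0:ℝ) 1 ∩ Ici t1, f1 r :=
        setIntegral_mono_set (hi1.mono_set inter_subset_left)
          (ae_restrict_of_forall_mem (measurableSet_Ioo.inter measurableSet_Ici)
            fun r hr => (hf1pos r hr.1).le)
          (Filter.Eventually.of_forall (inter_subset_inter_right _ (Ici_subset_Ici.mpr h10)))

/-- **Proposition 1 (simplified robust outcome test).**
Let `f0` and `f1` be probability densities on `(0,1)`, strictly positive there, whose
likelihood ratio `r ↦ f1 r / f0 r` is non-decreasing on `(0,1)` (the MLRP).  Decisions are
made by the threshold rule `D = 1` iff `R ≥ t_g`, so that `∫_{(0,1) ∩ [t_g, ∞)} f_g` is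
group `g`'s decision rate and
`(∫_{(0,1) ∩ [t_g, ∞)} r · f_g r) / (∫_{(0,1) ∩ [t_g, ∞)} f_g r)` its outcome rate
`E[R_g | R_g ≥ t_g]`.  If group `1` has a strictly lower decision rate and a strictly
higher outcome rate than group `0`, then `t0 < t1`. -/
theorem robust_outcome_test_simple
    (f0 f1 : ℝ → ℝ) (t0 t1 : ℝ)
    (hf0meas : Measurable f0) (hf1meas : Measurable f1)
    (hf0pos : ∀ r ∈ Ioo (0:ℝ) 1, 0 < f0 r)
    (hf1pos : ∀ r ∈ Ioo (0:ℝ) 1, 0 < f1 r)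
    (hf0pdf : (∫ r in Ioo (0:ℝ) 1, f0 r) = 1)
    (hf1pdf : (∫ r in Ioo (0:ℝ) 1, f1 r) = 1)
    (hmlr : MonotoneOn (fun r => f1 r / f0 r) (Ioo (0:ℝ) 1))
    (ht0 : t0 ∈ Ico (0:ℝ) 1) (ht1 : t1 ∈ Ico (0:ℝ) 1)
    -- benchmark test: group 1's decision rate is lower
    (hDR : (∫ r in Ioo (0:ℝ) 1 ∩ Ici t1, f1 r) < ∫ r in Ioo (0:ℝ) 1 ∩ Ici t0, f0 r)
    -- outcome test: group 1's outcome rate is higher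
    (hOR : (∫ r in Ioo (0:ℝ) 1 ∩ Ici t0, r * f0 r) / (∫ r in Ioo (0:ℝ) 1 ∩ Ici t0, f0 r) <
           (∫ r in Ioo (0:ℝ) 1 ∩ Ici t1, r * f1 r) / (∫ r in Ioo (0:ℝ) 1 ∩ Ici t1, f1 r)) :
    t0 < t1 :=
  robust_outcome_test_simple_general f0 f1 t0 t1 hf0pos hf1pos hf0pdf hf1pdf hmlr hDR
end

section
/- Let (Ω, F, P) be a probability space with random variables U : Ω → ℝ, G : Ω → {0,1}, and D : Ω → {0,1} satisfying: (i) P(G = g) > 0 and P(D = 1 | G = g) > 0 for g ∈ {0,1}; (ii) E[|U|] < ∞; (iii) 0 < P(G = 1 | U) < 1 almost surely; (iv) the conditional distributions law(U | G = 0) and law(U | G = 1) satisfy the monotone likelihood ratio property (one dominating the other); (v) for g ∈ {0,1}, the risk-decision curve d_g(u) := P(D = 1 | U = u, G = g) agrees law(U)-a.e. with a non-decreasing, right-continuous, [0,1]-valued function, and the distributions H0 and H1 on the extended reals generated by d_0 and d_1 (i.e., with d_g as CDF law(U)-a.e.) satisfy the monotone likelihood ratio property (one dominating the other). If P(D = 1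 | G = 0) > P(D = 1 | G = 1) and E[U | D = 1, G = 0] < E[U | D = 1, G = 1], then d_0(u) ≥ d_1(u) for law(U)-a.e. u, and d_0(u) > d_1(u) on a set of positive law(U)-measure. -/
open MeasureTheory ProbabilityTheory Set

/-- The monotone likelihood ratio property (MLRP) for two distributions `F0` and `F1`
on a linearly ordered measurable space, with `F0` dominating: the ratio of the
Radon–Nikodym derivatives of `F0` and `F1` with respect to the sum measure `F0 + F1`
is non-decreasing `(F0 + F1)`-almost everywhere (with the convention, automatic in
`ℝ≥0∞`, that the ratio is `∞` where the density of `F1` vanishes but that of `F0`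
does not). -/
def MLRP {α : Type*} [MeasurableSpace α] [LinearOrder α]
    (F0 F1 : Measure α) : Prop :=
  ∃ S : Set α, (F0 + F1) S = 0 ∧
    ∀ x, x ∉ S → ∀ y, y ∉ S → x ≤ y →
      F0.rnDeriv (F0 + F1) x / F1.rnDeriv (F0 + F1) x ≤
        F0.rnDeriv (F0 + F1) y / F1.rnDeriv (F0 + F1) y


/-!
The curve `d g` is the CDF of `H g`, so the MLRP between `H 0` and `H 1` puts one curve below
the other almost everywhere, and it suffices to rule out `d 0 ≤ d 1`. Assume it. If the law
`F 0` of `U` in group `0` dominates `F 1` in the likelihood-ratio order: the law of `U` given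
`D = 1, G = g` has density proportional to `d g` with respect to `F g`, and `d 0 / d 1` is
non-decreasing (a ratio of CDFs of MLRP-ordered laws, or constant when the curves agree), so the
selected laws are again likelihood-ratio ordered and the outcome rate of group `0` is at least
that of group `1`. If `F 1` dominates `F 0`, it dominates stochastically, and as `d 1` is
non-decreasing, `P(D = 1 | G = 0) = ∫ d 0 dF 0 ≤ ∫ d 1 dF 0 ≤ ∫ d 1 dF 1 = P(D = 1 | G = 1)`.
Either way one of the two tests fails.
-/

open scoped ENNReal

theorem ENNReal.mul_le_mul_of_div_le_div {a b c d : ℝ≥0∞} (hb : b ≠ ∞) (hc : c ≠ ∞)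
    (hd : d ≠ ∞) (h : a / b ≤ c / d) : a * d ≤ c * b := by
  rcases eq_or_ne d 0 with rfl | hd0
  · simp
  rcases eq_or_ne b 0 with rfl | hb0
  · rcases eq_or_ne a 0 with rfl | ha0
    · simp
    · rw [ENNReal.div_zero ha0, top_le_iff, ENNReal.div_eq_top] at h
      exact absurd h (by simp [hc, hd0])
  calc a * d = a / b * b * d := by rw [ENNReal.div_mul_cancel hb0 hb]
    _ ≤ c / d * b * d := by gcongr
    _ = c / d * d * b := by ring
    _ = c * b := by rw [ENNReal.div_mul_cancel hd0 hd]

theorem MeasureTheory.Integrable.cond {Ω : Type*} [MeasurableSpace Ω] {μ : Measure Ω}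
    {f : Ω → ℝ} (hf : Integrable f μ) (s : Set Ω) : Integrable f μ[|s] := by
  rcases eq_or_ne (μ s) 0 with hs | hs
  · simp [cond_eq_zero_of_meas_eq_zero hs]
  · exact hf.restrict.smul_measure (ENNReal.inv_ne_top.2 hs)

section LikelihoodRatioOrder

variable {α : Type*}

/-- `q₀ / q₁` is non-decreasing on `s`, cross-multiplied so that no `0 / 0` or `∞ / ∞` occurs. -/
def RatioMonotoneOn [Preorder α] (q₀ q₁ : α → ℝ≥0∞) (s : Set α) : Prop :=
  ∀ ⦃w⦄, w ∈ s → ∀ ⦃z⦄, z ∈ s → w ≤ z → q₀ w * q₁ z ≤ q₀ z * q₁ w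

/-- The likelihood-ratio order tested on sets: `μ` puts relatively more mass than `ν` on
every set lying above another one. -/
def LRDominates [MeasurableSpace α] [Preorder α] (μ ν : Measure α) : Prop :=
  ∀ ⦃A B : Set α⦄, MeasurableSet A → MeasurableSet B → (∀ a ∈ A, ∀ b ∈ B, a ≤ b) →
    μ A * ν B ≤ μ B * ν A

theorem RatioMonotoneOn.mono [Preorder α] {q₀ q₁ : α → ℝ≥0∞} {s t : Set α}
    (h : RatioMonotoneOn q₀ q₁ s) (hts : t ⊆ s) : RatioMonotoneOn q₀ q₁ t :=
  fun _ hw _ hz hwz => h (hts hw) (hts hz) hwz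

theorem RatioMonotoneOn.mul [Preorder α] {p₀ p₁ q₀ q₁ : α → ℝ≥0∞} {s : Set α}
    (hp : RatioMonotoneOn p₀ p₁ s) (hq : RatioMonotoneOn q₀ q₁ s) :
    RatioMonotoneOn (p₀ * q₀) (p₁ * q₁) s := by
  intro w hw z hz hwz
  calc p₀ w * q₀ w * (p₁ z * q₁ z) = p₀ w * p₁ z * (q₀ w * q₁ z) := by ring
    _ ≤ p₀ z * p₁ w * (q₀ z * q₁ w) := mul_le_mul' (hp hw hz hwz) (hq hw hz hwz)
    _ = p₀ z * q₀ z * (p₁ w * q₁ w) := by ring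

variable [MeasurableSpace α]

theorem lrDominates_withDensity_of_ratioMonotoneOn [Preorder α] (μ : Measure α) {p₀ p₁ : α → ℝ≥0∞}
    (hp₀ : AEMeasurable p₀ μ) (hp₁ : AEMeasurable p₁ μ) {T : Set α} (hT : μ T = 0)
    (hp : RatioMonotoneOn p₀ p₁ Tᶜ) : LRDominates (μ.withDensity p₀) (μ.withDensity p₁) := by
  intro A B hA hB hAB
  have hgood : ∀ {C : Set α}, MeasurableSet C → ∀ᵐ x ∂μ.restrict C, x ∈ C ∧ x ∉ T :=
    fun hC => (ae_restrict_mem hC).and (ae_restrict_of_ae (measure_eq_zero_iff_ae_notMem.1 hT))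
  rw [withDensity_apply _ hA, withDensity_apply _ hB, withDensity_apply _ hA,
    withDensity_apply _ hB, mul_comm (∫⁻ x in B, p₀ x ∂μ)]
  calc (∫⁻ y in A, p₀ y ∂μ) * ∫⁻ z in B, p₁ z ∂μ
      = ∫⁻ y in A, ∫⁻ z in B, p₀ y * p₁ z ∂μ ∂μ :=
        (lintegral_lintegral_mul hp₀.restrict hp₁.restrict).symm
    _ ≤ ∫⁻ y in A, ∫⁻ z in B, p₁ y * p₀ z ∂μ ∂μ := by
        refine lintegral_mono_ae ((hgood hA).mono fun y hy => lintegral_mono_ae ?_)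
        filter_upwards [hgood hB] with z hz
        rw [mul_comm (p₁ y)]
        exact hp hy.2 hz.2 (hAB y hy.1 z hz.1)
    _ = (∫⁻ y in A, p₁ y ∂μ) * ∫⁻ z in B, p₀ z ∂μ :=
        lintegral_lintegral_mul hp₁.restrict hp₀.restrict

theorem LRDominates.smul [Preorder α] {μ ν : Measure α} (h : LRDominates μ ν) (a b : ℝ≥0∞) :
    LRDominates (a • μ) (b • ν) := by
  intro A B hA hB hAB
  simp only [Measure.smul_apply, smul_eq_mul]
  calc a * μ A * (b * ν B) = a * b * (μ A * ν B) := by ring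
    _ ≤ a * b * (μ B * ν A) := mul_le_mul_right (h hA hB hAB) _
    _ = a * μ B * (b * ν A) := by ring

section LinearOrder

variable [LinearOrder α]

theorem MLRP.exists_ratioMonotoneOn_rnDeriv {F₀ F₁ : Measure α} [SigmaFinite F₀]
    [SigmaFinite F₁] (h : MLRP F₀ F₁) : ∃ T, (F₀ + F₁) T = 0 ∧
      RatioMonotoneOn (F₀.rnDeriv (F₀ + F₁)) (F₁.rnDeriv (F₀ + F₁)) Tᶜ := by
  obtain ⟨S, hS, hmono⟩ := h
  set g₀ := F₀.rnDeriv (F₀ + F₁)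
  set g₁ := F₁.rnDeriv (F₀ + F₁)
  refine ⟨S ∪ {x | g₀ x = ∞} ∪ {x | g₁ x = ∞}, ?_, ?_⟩
  · refine measure_union_null (measure_union_null hS ?_) ?_ <;>
      exact measure_eq_zero_iff_ae_notMem.2 (Measure.rnDeriv_ne_top _ _)
  · intro w hw z hz hwz
    simp only [mem_compl_iff, mem_union, mem_ofPred_eq, not_or] at hw hz
    exact ENNReal.mul_le_mul_of_div_le_div hw.2 hz.1.2 hz.2 (hmono w hw.1.1 z hz.1.1 hwz)

theorem MLRP.lrDominates_withDensity {F₀ F₁ : Measure α} [SigmaFinite F₀] [SigmaFinite F₁]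
    (h : MLRP F₀ F₁) {q₀ q₁ : α → ℝ≥0∞} (hq₀ : Measurable q₀) (hq₁ : Measurable q₁)
    (hq : RatioMonotoneOn q₀ q₁ univ) :
    LRDominates (F₀.withDensity q₀) (F₁.withDensity q₁) := by
  obtain ⟨T, hT, hg⟩ := h.exists_ratioMonotoneOn_rnDeriv
  have hdens : ∀ {F : Measure α} [SigmaFinite F], F ≪ F₀ + F₁ → ∀ {q : α → ℝ≥0∞},
      Measurable q → F.withDensity q = (F₀ + F₁).withDensity (F.rnDeriv (F₀ + F₁) * q) :=
    fun hF _ hq => by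
      rw [withDensity_mul _ (Measure.measurable_rnDeriv _ _) hq,
        Measure.withDensity_rnDeriv_eq _ _ hF]
  rw [hdens ((Measure.AbsolutelyContinuous.refl _).add_right _) hq₀,
    hdens ((Measure.AbsolutelyContinuous.refl _).add_right' _) hq₁]
  exact lrDominates_withDensity_of_ratioMonotoneOn _
    ((Measure.measurable_rnDeriv _ _).mul hq₀).aemeasurable
    ((Measure.measurable_rnDeriv _ _).mul hq₁).aemeasurable hT (hg.mul (hq.mono (subset_univ _)))

theorem MLRP.lrDominates {F₀ F₁ : Measure α} [SigmaFinite F₀] [SigmaFinite F₁]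
    (h : MLRP F₀ F₁) : LRDominates F₀ F₁ := by
  simpa only [withDensity_one] using
    h.lrDominates_withDensity measurable_const measurable_const (q₀ := 1) (q₁ := 1)
      fun _ _ _ _ _ => le_rfl

theorem LRDominates.mul_le_of_isLowerSet {μ ν : Measure α} (h : LRDominates μ ν) {L L' : Set α}
    (hL : IsLowerSet L) (hLm : MeasurableSet L) (hL'm : MeasurableSet L') (hLL' : L ⊆ L') :
    μ L * ν L' ≤ μ L' * ν L := by
  have hcross := h hLm (hL'm.diff hLm) fun a ha b hb =>
    (not_le.1 fun hba => hb.2 (hL hba ha)).le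
  have hsplit : ∀ ρ : Measure α, ρ L' = ρ L + ρ (L' \ L) := fun ρ => by
    rw [← measure_union disjoint_sdiff_right (hL'm.diff hLm), union_sdiff_cancel hLL']
  rw [hsplit μ, hsplit ν, mul_add, add_mul, mul_comm (μ L) (ν L)]
  gcongr

theorem LRDominates.measure_le_of_isLowerSet {μ ν : Measure α} [IsProbabilityMeasure μ]
    [IsProbabilityMeasure ν] (h : LRDominates μ ν) {L : Set α} (hL : IsLowerSet L)
    (hLm : MeasurableSet L) : μ L ≤ ν L := by
  simpa using h.mul_le_of_isLowerSet hL hLm MeasurableSet.univ (subset_univ L)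

end LinearOrder

theorem lintegral_ofReal_le_of_forall_measure_lt_le {μ ν : Measure α} {f : α → ℝ}
    (hf : Measurable f) (h : ∀ t > 0, μ {a | t < f a} ≤ ν {a | t < f a}) :
    ∫⁻ a, ENNReal.ofReal (f a) ∂μ ≤ ∫⁻ a, ENNReal.ofReal (f a) ∂ν := by
  have hcake : ∀ ρ : Measure α,
      ∫⁻ a, ENNReal.ofReal (f a) ∂ρ = ∫⁻ t in Ioi 0, ρ {a | t < max (f a) 0} := fun ρ => by
    rw [← lintegral_eq_lintegral_meas_lt ρ (f := fun a => max (f a) 0)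
      (ae_of_all _ fun a => le_max_right _ _) (hf.max measurable_const).aemeasurable]
    simp
  rw [hcake, hcake]
  refine setLIntegral_mono' measurableSet_Ioi fun t (ht : 0 < t) => ?_
  have hlevel : {a | t < max (f a) 0} = {a | t < f a} := by
    ext a
    simp [ht.not_gt]
  rw [hlevel]
  exact h t ht

theorem integral_le_integral_of_forall_isLowerSet [Preorder α] {μ ν : Measure α}
    [IsProbabilityMeasure μ] [IsProbabilityMeasure ν] {f : α → ℝ} (hf : Monotone f)
    (hfm : Measurable f) (hμ : Integrable f μ) (hν : Integrable f ν)
    (h : ∀ L, IsLowerSet L → MeasurableSet L → ν L ≤ μ L) :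
    ∫ a, f a ∂μ ≤ ∫ a, f a ∂ν := by
  have hpos : ∫⁻ a, ENNReal.ofReal (f a) ∂μ ≤ ∫⁻ a, ENNReal.ofReal (f a) ∂ν := by
    refine lintegral_ofReal_le_of_forall_measure_lt_le hfm fun t _ => ?_
    have hLm : MeasurableSet {a | f a ≤ t} := measurableSet_le hfm measurable_const
    have hcompl : {a | t < f a} = {a | f a ≤ t}ᶜ := by ext; simp
    rw [hcompl, prob_compl_eq_one_sub hLm, prob_compl_eq_one_sub hLm]
    exact tsub_le_tsub_left (h _ (fun a b hba ha => (hf hba).trans ha) hLm) 1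
  have hneg : ∫⁻ a, ENNReal.ofReal (-f a) ∂ν ≤ ∫⁻ a, ENNReal.ofReal (-f a) ∂μ :=
    lintegral_ofReal_le_of_forall_measure_lt_le hfm.neg fun t _ =>
      h _ (fun a b hba (ha : t < -f a) => show t < -f b by linarith [hf hba])
        (measurableSet_lt measurable_const hfm.neg)
  rw [integral_eq_lintegral_pos_part_sub_lintegral_neg_part hμ,
    integral_eq_lintegral_pos_part_sub_lintegral_neg_part hν]
  gcongr
  · exact hν.lintegral_lt_top.ne
  · exact hμ.neg.lintegral_lt_top.ne

theorem LRDominates.integral_le [LinearOrder α] {μ ν : Measure α} [IsProbabilityMeasure μ]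
    [IsProbabilityMeasure ν] (h : LRDominates μ ν) {f : α → ℝ} (hf : Monotone f)
    (hfm : Measurable f) (hμ : Integrable f μ) (hν : Integrable f ν) :
    ∫ a, f a ∂ν ≤ ∫ a, f a ∂μ :=
  integral_le_integral_of_forall_isLowerSet hf hfm hν hμ fun _ hL hLm =>
    h.measure_le_of_isLowerSet hL hLm

end LikelihoodRatioOrder

theorem map_cond_eq_smul_withDensity {Ω β : Type*} [MeasurableSpace Ω] [MeasurableSpace β]
    {ν : Measure Ω} [IsFiniteMeasure ν] {X : Ω → β} (hX : Measurable X) {E : Set Ω}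
    (hE : MeasurableSet E) {p : β → ℝ} (hp : Integrable p (ν.map X))
    (h : ∀ A, MeasurableSet A → (ν (E ∩ X ⁻¹' A)).toReal = ∫ u in A, p u ∂ν.map X) :
    (ν[|E]).map X = (ν E)⁻¹ • (ν.map X).withDensity fun u => ENNReal.ofReal (p u) := by
  have hp₀ : 0 ≤ᵐ[ν.map X] p := ae_nonneg_of_forall_setIntegral_nonneg hp fun A hA _ => by
    rw [← h A hA]
    exact ENNReal.toReal_nonneg
  ext A hA
  rw [Measure.map_apply hX hA, cond_apply hE, Measure.smul_apply, withDensity_apply _ hA,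
    smul_eq_mul, ← ofReal_integral_eq_lintegral_ofReal hp.integrableOn (ae_restrict_of_ae hp₀),
    ← h A hA, ENNReal.ofReal_toReal (measure_ne_top _ _)]

section ExtendedRealCDF

variable (H : Measure EReal) [IsFiniteMeasure H]

theorem monotone_toReal_measure_Iic_coe : Monotone fun u : ℝ => (H (Iic (u : EReal))).toReal :=
  fun _ _ huv => ENNReal.toReal_mono (measure_ne_top _ _)
    (measure_mono (Iic_subset_Iic.2 (EReal.coe_le_coe_iff.2 huv)))

theorem integrable_toReal_measure_Iic_coe (μ : Measure ℝ) [IsFiniteMeasure μ] :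
    Integrable (fun u : ℝ => (H (Iic (u : EReal))).toReal) μ :=
  .of_bound (monotone_toReal_measure_Iic_coe H).measurable.aestronglyMeasurable (H univ).toReal
    (ae_of_all _ fun _ => by
      rw [Real.norm_of_nonneg ENNReal.toReal_nonneg]
      exact ENNReal.toReal_mono (measure_ne_top _ _) (measure_mono (subset_univ _)))

end ExtendedRealCDF

theorem MLRP.ae_le_of_ae_eq_toReal_measure_Iic {H₀ H₁ : Measure EReal} [IsProbabilityMeasure H₀]
    [IsProbabilityMeasure H₁] (hH : MLRP H₀ H₁) {μ : Measure ℝ} {d₀ d₁ : ℝ → ℝ}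
    (h₀ : ∀ᵐ u ∂μ, d₀ u = (H₀ (Iic (u : EReal))).toReal)
    (h₁ : ∀ᵐ u ∂μ, d₁ u = (H₁ (Iic (u : EReal))).toReal) : ∀ᵐ u ∂μ, d₀ u ≤ d₁ u := by
  filter_upwards [h₀, h₁] with u hu₀ hu₁
  rw [hu₀, hu₁]
  exact ENNReal.toReal_mono (measure_ne_top _ _)
    (hH.lrDominates.measure_le_of_isLowerSet (isLowerSet_Iic _) measurableSet_Iic)

theorem exists_ratioMonotoneOn_ae_eq_ofReal {H : Fin 2 → Measure EReal}
    [∀ g, IsProbabilityMeasure (H g)] (hH : MLRP (H 0) (H 1) ∨ MLRP (H 1) (H 0))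
    {μ : Measure ℝ} {d : Fin 2 → ℝ → ℝ}
    (hd : ∀ g, ∀ᵐ u ∂μ, d g u = (H g (Iic (u : EReal))).toReal)
    (hle : ∀ᵐ u ∂μ, d 0 u ≤ d 1 u) :
    ∃ q : Fin 2 → ℝ → ℝ≥0∞, (∀ g, Measurable (q g)) ∧ RatioMonotoneOn (q 0) (q 1) univ ∧
      ∀ g, (fun u => ENNReal.ofReal (d g u)) =ᵐ[μ] q g := by
  have hcdf : ∀ g, Monotone fun u : ℝ => H g (Iic (u : EReal)) :=
    fun g _ _ huv => measure_mono (Iic_subset_Iic.2 (EReal.coe_le_coe_iff.2 huv))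
  have hofReal : ∀ g g', (∀ᵐ u ∂μ, d g u = d g' u) →
      (fun u => ENNReal.ofReal (d g u)) =ᵐ[μ] fun u => H g' (Iic (u : EReal)) :=
    fun g g' hgg' => by
      filter_upwards [hgg', hd g'] with u hu hu'
      rw [hu, hu', ENNReal.ofReal_toReal (measure_ne_top _ _)]
  rcases hH with hH | hH
  · refine ⟨fun g u => H g (Iic (u : EReal)), fun g => (hcdf g).measurable,
      fun w _ z _ hwz => hH.lrDominates.mul_le_of_isLowerSet (isLowerSet_Iic _) measurableSet_Iic
        measurableSet_Iic (Iic_subset_Iic.2 (EReal.coe_le_coe_iff.2 hwz)),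
      fun g => hofReal g g (ae_of_all _ fun _ => rfl)⟩
  -- Here `d 0 = d 1` almost everywhere, so one curve serves as a version of both.
  have heq : ∀ᵐ u ∂μ, d 0 u = d 1 u := by
    filter_upwards [hle, hH.ae_le_of_ae_eq_toReal_measure_Iic (hd 1) (hd 0)] with u h₀₁ h₁₀
    exact le_antisymm h₀₁ h₁₀
  refine ⟨fun _ u => H 1 (Iic (u : EReal)), fun _ => (hcdf 1).measurable,
    fun _ _ _ _ _ => (mul_comm _ _).le, fun g => ?_⟩
  fin_cases g
  · exact hofReal 0 1 heq
  · exact hofReal 1 1 (ae_of_all _ fun _ => rfl)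

theorem integral_cond_le_of_MLRP {Ω : Type*} [MeasurableSpace Ω] {ν : Fin 2 → Measure Ω}
    [∀ g, IsProbabilityMeasure (ν g)] {X : Ω → ℝ} (hX : Measurable X)
    (hXint : ∀ g, Integrable X (ν g)) (hlaw : MLRP ((ν 0).map X) ((ν 1).map X)) {E : Set Ω}
    (hE : MeasurableSet E) (hE₀ : ∀ g, ν g E ≠ 0) {p : Fin 2 → ℝ → ℝ}
    (hp : ∀ g, Integrable (p g) ((ν g).map X))
    (hsel : ∀ g A, MeasurableSet A →
      (ν g (E ∩ X ⁻¹' A)).toReal = ∫ u in A, p g u ∂(ν g).map X)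
    {q : Fin 2 → ℝ → ℝ≥0∞} (hq : ∀ g, Measurable (q g)) (hqmono : RatioMonotoneOn (q 0) (q 1) univ)
    (hpq : ∀ g, (fun u => ENNReal.ofReal (p g u)) =ᵐ[(ν g).map X] q g) :
    ∫ ω, X ω ∂(ν 1)[|E] ≤ ∫ ω, X ω ∂(ν 0)[|E] := by
  have : ∀ g, IsProbabilityMeasure (((ν g)[|E]).map X) := fun g =>
    have := cond_isProbabilityMeasure (hE₀ g)
    Measure.isProbabilityMeasure_map hX.aemeasurable
  have hsel' : ∀ g, ((ν g)[|E]).map X = (ν g E)⁻¹ • ((ν g).map X).withDensity (q g) := fun g => by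
    rw [map_cond_eq_smul_withDensity hX hE (hp g) (hsel g), withDensity_congr_ae (hpq g)]
  have hdom : LRDominates (((ν 0)[|E]).map X) (((ν 1)[|E]).map X) := by
    rw [hsel', hsel']
    exact (hlaw.lrDominates_withDensity (hq 0) (hq 1) hqmono).smul _ _
  have hint : ∀ g, Integrable id (((ν g)[|E]).map X) := fun g =>
    (integrable_map_measure aestronglyMeasurable_id hX.aemeasurable).2 ((hXint g).cond E)
  have hmean : ∀ g, ∫ ω, X ω ∂(ν g)[|E] = ∫ u, id u ∂((ν g)[|E]).map X := fun g =>
    (integral_map hX.aemeasurable aestronglyMeasurable_id).symm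
  rw [hmean, hmean]
  exact hdom.integral_le monotone_id measurable_id (hint 0) (hint 1)

theorem integral_le_integral_of_MLRP_of_ae_le {F₀ F₁ : Measure ℝ} [IsProbabilityMeasure F₀]
    [IsProbabilityMeasure F₁] (hlaw : MLRP F₁ F₀) {p₀ p₁ f : ℝ → ℝ} (hf : Monotone f)
    (hf₀ : Integrable f F₀) (hf₁ : Integrable f F₁) (hp₀ : Integrable p₀ F₀)
    (hp₁f₀ : p₁ =ᵐ[F₀] f) (hp₁f₁ : p₁ =ᵐ[F₁] f) (hle : p₀ ≤ᵐ[F₀] p₁) :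
    ∫ u, p₀ u ∂F₀ ≤ ∫ u, p₁ u ∂F₁ := by
  calc ∫ u, p₀ u ∂F₀ ≤ ∫ u, p₁ u ∂F₀ := integral_mono_ae hp₀ (hf₀.congr hp₁f₀.symm) hle
    _ = ∫ u, f u ∂F₀ := integral_congr_ae hp₁f₀
    _ ≤ ∫ u, f u ∂F₁ := hlaw.lrDominates.integral_le hf hf.measurable hf₁ hf₀
    _ = ∫ u, p₁ u ∂F₁ := integral_congr_ae hp₁f₁.symm

theorem robust_outcome_test_general_general
    {Ω : Type*} [MeasurableSpace Ω] (P : Measure Ω) [IsProbabilityMeasure P]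
    (U : Ω → ℝ) (G D : Ω → Fin 2)
    (hU : Measurable U) (hG : Measurable G) (hD : Measurable D)
    -- (i) non-trivial groups and positive decision rates
    (hGpos : ∀ g : Fin 2, 0 < P {ω | G ω = g})
    (hDpos : ∀ g : Fin 2, 0 < P[|{ω | G ω = g}] {ω | D ω = 1})
    -- (ii) U has a well-defined (finite) expectation
    (hUint : Integrable U P)
    -- (iv) the conditional laws of U by group satisfy the MLRP, one dominating the other
    (hlawmlrp : MLRP ((P[|{ω | G ω = 0}]).map U) ((P[|{ω | G ω = 1}]).map U) ∨
      MLRP ((P[|{ω | G ω = 1}]).map U) ((P[|{ω | G ω = 0}]).map U))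
    -- (v) risk-decision curves d g (versions of P(D = 1 | U = u, G = g)) generating
    -- distributions H g on the extended reals that satisfy the MLRP
    (d : Fin 2 → ℝ → ℝ)
    (hdversion : ∀ g : Fin 2, ∀ A : Set ℝ, MeasurableSet A →
      (P[|{ω | G ω = g}] {ω | D ω = 1 ∧ U ω ∈ A}).toReal =
        ∫ u in A, d g u ∂((P[|{ω | G ω = g}]).map U))
    (H : Fin 2 → Measure EReal) (hHprob : ∀ g, IsProbabilityMeasure (H g))
    (hgen : ∀ g : Fin 2, ∀ᵐ u ∂(P.map U), d g u = (H g (Iic (u : EReal))).toReal)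
    (hHmlrp : MLRP (H 0) (H 1) ∨ MLRP (H 1) (H 0))
    -- benchmark test: the decision rate for group 0 exceeds that for group 1
    (hbench : P[|{ω | G ω = 1}] {ω | D ω = 1} < P[|{ω | G ω = 0}] {ω | D ω = 1})
    -- outcome test: the outcome rate for group 1 exceeds that for group 0
    (houtcome : (∫ ω, U ω ∂P[|{ω | D ω = 1 ∧ G ω = 0}]) <
      ∫ ω, U ω ∂P[|{ω | D ω = 1 ∧ G ω = 1}]) :
    (∀ᵐ u ∂(P.map U), d 1 u ≤ d 0 u) ∧ 0 < (P.map U) {u | d 1 u < d 0 u} := by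
  have hGm : ∀ g, MeasurableSet {ω | G ω = g} := fun g => hG (measurableSet_singleton g)
  have hDm : MeasurableSet {ω | D ω = 1} := hD (measurableSet_singleton 1)
  set ν : Fin 2 → Measure Ω := fun g => P[|{ω | G ω = g}]
  have : ∀ g, IsProbabilityMeasure (ν g) := fun g => cond_isProbabilityMeasure (hGpos g).ne'
  have : ∀ g, IsProbabilityMeasure ((ν g).map U) := fun g =>
    Measure.isProbabilityMeasure_map hU.aemeasurable
  have hac : ∀ g, (ν g).map U ≪ P.map U := fun g => cond_absolutelyContinuous.map hU
  have hdint : ∀ g g', Integrable (d g) ((ν g').map U) := fun g g' =>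
    (integrable_toReal_measure_Iic_coe (H g) _).congr
      (Filter.EventuallyEq.symm ((hac g').ae_le (hgen g)))
  have hnot_le : ¬ ∀ᵐ u ∂P.map U, d 0 u ≤ d 1 u := by
    intro hle
    rcases hlawmlrp with hlaw | hlaw
    · obtain ⟨q, hq, hqmono, hdq⟩ := exists_ratioMonotoneOn_ae_eq_ofReal hHmlrp hgen hle
      have hsel : ∀ g, (ν g)[|{ω | D ω = 1}] = P[|{ω | D ω = 1 ∧ G ω = g}] := fun g => by
        rw [cond_cond_eq_cond_inter (hGm g) hDm, inter_comm]
        rfl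
      refine (integral_cond_le_of_MLRP hU (fun g => hUint.cond _) hlaw hDm
        (fun g => (hDpos g).ne') (fun g => hdint g g) hdversion hq hqmono
        fun g => (hac g).ae_le (hdq g)).not_gt ?_
      rwa [hsel, hsel]
    · have hrate : ∀ g, (ν g {ω | D ω = 1}).toReal = ∫ u, d g u ∂(ν g).map U := fun g => by
        simpa using hdversion g univ MeasurableSet.univ
      refine ((ENNReal.toReal_lt_toReal (measure_ne_top _ _) (measure_ne_top _ _)).2
        hbench).not_ge ?_
      rw [hrate, hrate]
      exact integral_le_integral_of_MLRP_of_ae_le hlaw (monotone_toReal_measure_Iic_coe (H 1))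
        (integrable_toReal_measure_Iic_coe _ _) (integrable_toReal_measure_Iic_coe _ _)
        (hdint 0 0) ((hac 0).ae_le (hgen 1)) ((hac 1).ae_le (hgen 1)) ((hac 0).ae_le hle)
  rcases hHmlrp with hH | hH
  · exact absurd (hH.ae_le_of_ae_eq_toReal_measure_Iic (hgen 0) (hgen 1)) hnot_le
  · refine ⟨hH.ae_le_of_ae_eq_toReal_measure_Iic (hgen 1) (hgen 0),
      pos_iff_ne_zero.2 fun hnull => hnot_le ?_⟩
    rw [ae_iff]
    simpa only [not_le] using hnull

/-- **Theorem 1 (general correctness of the robust outcome test).**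
Let `(Ω, P)` be a probability space carrying a utility `U : Ω → ℝ`, a group indicator
`G : Ω → {0,1}`, and a decision `D : Ω → {0,1}`, with
(i) `P(G = g) > 0` and `P(D = 1 | G = g) > 0` for `g ∈ {0,1}`;
(ii) `E|U| < ∞`;
(iii) overlap: `0 < P(G = 1 | U) < 1` a.s. (in terms of the conditional expectation of
the indicator of `{G = 1}` given `σ(U)`);
(iv) the conditional laws `law(U | G = 0)` and `law(U | G = 1)` satisfy the MLRP,
one dominating the other;
(v) the risk-decision curves `d g`, characterized by
`P(D = 1, U ∈ A | G = g) = ∫_A d g u d(law(U | G = g))` for all Borel `A`, generate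
probability distributions `H g` on the extended reals (i.e. `d g` agrees `law(U)`-a.e.
with the CDF of `H g`, hence is a.e. equal to a non-decreasing, right-continuous,
`[0,1]`-valued function), and `H 0`, `H 1` satisfy the MLRP, one dominating the other.
If the decision rate for group `0` strictly exceeds that of group `1` while the outcome
rate `E[U | D = 1, G = 0]` is strictly smaller than `E[U | D = 1, G = 1]`, then
`d 0 ≥ d 1` holds `law(U)`-a.e., with strict inequality on a set of positive
`law(U)`-measure. -/
theorem robust_outcome_test_general
    {Ω : Type*} [MeasurableSpace Ω] (P : Measure Ω) [IsProbabilityMeasure P]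
    (U : Ω → ℝ) (G D : Ω → Fin 2)
    (hU : Measurable U) (hG : Measurable G) (hD : Measurable D)
    -- (i) non-trivial groups and positive decision rates
    (hGpos : ∀ g : Fin 2, 0 < P {ω | G ω = g})
    (hDpos : ∀ g : Fin 2, 0 < P[|{ω | G ω = g}] {ω | D ω = 1})
    -- (ii) U has a well-defined (finite) expectation
    (hUint : Integrable U P)
    -- (iii) overlap
    (hoverlap : ∀ᵐ ω ∂P,
      0 < (P[{ω | G ω = 1}.indicator (fun _ => (1:ℝ)) |
              MeasurableSpace.comap U Real.measurableSpace]) ω ∧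
        (P[{ω | G ω = 1}.indicator (fun _ => (1:ℝ)) |
              MeasurableSpace.comap U Real.measurableSpace]) ω < 1)
    -- (iv) the conditional laws of U by group satisfy the MLRP, one dominating the other
    (hlawmlrp : MLRP ((P[|{ω | G ω = 0}]).map U) ((P[|{ω | G ω = 1}]).map U) ∨
      MLRP ((P[|{ω | G ω = 1}]).map U) ((P[|{ω | G ω = 0}]).map U))
    -- (v) risk-decision curves d g (versions of P(D = 1 | U = u, G = g)) generating
    -- distributions H g on the extended reals that satisfy the MLRP
    (d : Fin 2 → ℝ → ℝ) (hdmeas : ∀ g, Measurable (d g))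
    (hdversion : ∀ g : Fin 2, ∀ A : Set ℝ, MeasurableSet A →
      (P[|{ω | G ω = g}] {ω | D ω = 1 ∧ U ω ∈ A}).toReal =
        ∫ u in A, d g u ∂((P[|{ω | G ω = g}]).map U))
    (H : Fin 2 → Measure EReal) (hHprob : ∀ g, IsProbabilityMeasure (H g))
    (hgen : ∀ g : Fin 2, ∀ᵐ u ∂(P.map U), d g u = (H g (Iic (u : EReal))).toReal)
    (hHmlrp : MLRP (H 0) (H 1) ∨ MLRP (H 1) (H 0))
    -- benchmark test: the decision rate for group 0 exceeds that for group 1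
    (hbench : P[|{ω | G ω = 1}] {ω | D ω = 1} < P[|{ω | G ω = 0}] {ω | D ω = 1})
    -- outcome test: the outcome rate for group 1 exceeds that for group 0
    (houtcome : (∫ ω, U ω ∂P[|{ω | D ω = 1 ∧ G ω = 0}]) <
      ∫ ω, U ω ∂P[|{ω | D ω = 1 ∧ G ω = 1}]) :
    (∀ᵐ u ∂(P.map U), d 1 u ≤ d 0 u) ∧ 0 < (P.map U) {u | d 1 u < d 0 u} :=
  robust_outcome_test_general_general P U G D hU hG hD hGpos hDpos hUint hlawmlrp d hdversion H
    hHprob hgen hHmlrp hbench houtcome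
end

section
/- Let μ be a Borel probability measure on ℝ and let d : ℝ → ℝ be a function such that, outside a μ-null set, d is non-decreasing, right-continuous, and takes values in [0,1]. Then there exists a function F : ℝ → [0,1] that is non-decreasing and right-continuous on all of ℝ and satisfies F(u) = d(u) for μ-almost every u. (Equivalently, d agrees μ-a.e. with the cumulative distribution function of a probability distribution on the extended reals ℝ ∪ {−∞, +∞}.) -/
/-!
Off the null set `S`, `d` is monotone, so its running supremum
`t ↦ sup ({0} ∪ d '' (Iic t \ S))` is a monotone function on all of `ℝ` that agrees with `d`
off `S`. Its right limit is monotone and right-continuous, and right-continuity of `d` along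
`Sᶜ` makes the right limit equal to `d` at every point off `S`.
-/

open MeasureTheory Set Filter Topology

/-- The floor `a` keeps the supremum meaningful when `Iic t ∩ T` is empty. -/
noncomputable def supBelow (a : ℝ) (d : ℝ → ℝ) (T : Set ℝ) (t : ℝ) : ℝ :=
  sSup (insert a (d '' (Iic t ∩ T)))

section SupBelow

variable {a c t x : ℝ} {d : ℝ → ℝ} {T : Set ℝ}

theorem bddAbove_insert_image_Iic_inter (hd : BddAbove (d '' T)) (t : ℝ) :
    BddAbove (insert a (d '' (Iic t ∩ T))) :=
  (hd.mono (image_mono inter_subset_right)).insert a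

theorem left_le_supBelow (hd : BddAbove (d '' T)) (t : ℝ) : a ≤ supBelow a d T t :=
  le_csSup (bddAbove_insert_image_Iic_inter hd t) (mem_insert _ _)

theorem le_supBelow (hd : BddAbove (d '' T)) (hx : x ∈ T) (hxt : x ≤ t) :
    d x ≤ supBelow a d T t :=
  le_csSup (bddAbove_insert_image_Iic_inter hd t) (mem_insert_of_mem _ ⟨x, ⟨hxt, hx⟩, rfl⟩)

theorem supBelow_le (ha : a ≤ c) (h : ∀ y ∈ T, y ≤ t → d y ≤ c) : supBelow a d T t ≤ c :=
  csSup_le (insert_nonempty _ _) <| by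
    rintro _ (rfl | ⟨y, ⟨hyt, hy⟩, rfl⟩)
    exacts [ha, h y hy hyt]

theorem monotone_supBelow (hd : BddAbove (d '' T)) : Monotone (supBelow a d T) :=
  fun _ _ hst => csSup_le_csSup (bddAbove_insert_image_Iic_inter hd _) (insert_nonempty _ _)
    (insert_subset_insert (image_mono (inter_subset_inter_left _ (Iic_subset_Iic.2 hst))))

theorem supBelow_eq_of_mem (hd : BddAbove (d '' T)) (hmono : MonotoneOn d T) (hx : x ∈ T)
    (ha : a ≤ d x) : supBelow a d T x = d x :=
  (supBelow_le ha fun _ hy hyx => hmono hy hx hyx).antisymm (le_supBelow hd hx le_rfl)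

theorem rightLim_supBelow_eq_of_mem (hd : BddAbove (d '' T)) (hmono : MonotoneOn d T)
    (hx : x ∈ T) (ha : a ≤ d x) (hrc : ContinuousWithinAt d (Ici x ∩ T) x) :
    Function.rightLim (supBelow a d T) x = d x := by
  refine le_antisymm (le_of_forall_gt_imp_ge_of_dense fun c hc => ?_)
    (supBelow_eq_of_mem hd hmono hx ha ▸ (monotone_supBelow hd).le_rightLim le_rfl)
  have hnear : ∀ᶠ y in 𝓝[≥] x, y ∈ T → d y < c := by
    rw [← eventually_inf_principal, ← nhdsWithin_inter']
    exact hrc (Iio_mem_nhds hc)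
  obtain ⟨u, hxu, hu⟩ := mem_nhdsGE_iff_exists_Ico_subset.1 hnear
  obtain ⟨v, hxv, hvu⟩ := exists_between (mem_Ioi.1 hxu)
  refine ((monotone_supBelow hd).rightLim_le hxv).trans
    (supBelow_le (ha.trans hc.le) fun y hy hyv => ?_)
  rcases le_or_gt y x with hyx | hxy
  · exact (hmono hy hx hyx).trans hc.le
  · exact (hu ⟨hxy.le, hyv.trans_lt hvu⟩ hy).le

end SupBelow

theorem riskDecisionCurve_generates_distribution_general
    (μ : Measure ℝ) (d : ℝ → ℝ)
    (h : ∃ S : Set ℝ, μ S = 0 ∧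
      (∀ x, x ∉ S → d x ∈ Icc (0:ℝ) 1) ∧
      (∀ x, x ∉ S → ∀ y, y ∉ S → x ≤ y → d x ≤ d y) ∧
      (∀ x, x ∉ S → ContinuousWithinAt d (Ici x ∩ Sᶜ) x)) :
    ∃ F : ℝ → ℝ, (∀ x, F x ∈ Icc (0:ℝ) 1) ∧ Monotone F ∧
      (∀ x, ContinuousWithinAt F (Ici x) x) ∧ ∀ᵐ u ∂μ, F u = d u := by
  obtain ⟨S, hS, hrange, hmono, hrc⟩ := h
  have hd : BddAbove (d '' Sᶜ) := ⟨1, by rintro _ ⟨x, hx, rfl⟩; exact (hrange x hx).2⟩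
  have hG : Monotone (supBelow 0 d Sᶜ) := monotone_supBelow hd
  let F := hG.stieltjesFunction
  have hF : ∀ x, F x = Function.rightLim (supBelow 0 d Sᶜ) x := hG.stieltjesFunction_eq
  refine ⟨F, fun x => ⟨?_, ?_⟩, F.mono, F.right_continuous, ?_⟩
  · exact hF x ▸ (left_le_supBelow hd x).trans (hG.le_rightLim le_rfl)
  · exact hF x ▸ (hG.rightLim_le (lt_add_one x)).trans
      (supBelow_le zero_le_one fun y hy _ => (hrange y hy).2)
  · filter_upwards [compl_mem_ae_iff.2 hS] with u hu
    exact (hF u).trans <| rightLim_supBelow_eq_of_mem hd (fun x hx y hy => hmono x hx y hy) hu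
      (hrange u hu).1 (hrc u hu)

/-- **Lemma A.1.**  Let `μ` be a Borel probability measure on `ℝ` and let `d : ℝ → ℝ` be
such that, outside a `μ`-null set `S`, `d` is `[0,1]`-valued, non-decreasing, and
right-continuous (along the complement of `S`).  Then there is a function `F : ℝ → [0,1]`
that is non-decreasing and right-continuous on all of `ℝ` and agrees with `d`
`μ`-almost everywhere.  (Equivalently, `d` agrees `μ`-a.e. with the CDF of a probability
distribution on the extended reals.) -/
theorem riskDecisionCurve_generates_distribution
    (μ : Measure ℝ) [IsProbabilityMeasure μ] (d : ℝ → ℝ)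
    (h : ∃ S : Set ℝ, μ S = 0 ∧
      (∀ x, x ∉ S → d x ∈ Icc (0:ℝ) 1) ∧
      (∀ x, x ∉ S → ∀ y, y ∉ S → x ≤ y → d x ≤ d y) ∧
      (∀ x, x ∉ S → ContinuousWithinAt d (Ici x ∩ Sᶜ) x)) :
    ∃ F : ℝ → ℝ, (∀ x, F x ∈ Icc (0:ℝ) 1) ∧ Monotone F ∧
      (∀ x, ContinuousWithinAt F (Ici x) x) ∧ ∀ᵐ u ∂μ, F u = d u :=
  riskDecisionCurve_generates_distribution_general μ d h
end

section
/- Let X and Y be real-valued random variables, let Z ~ Bernoulli(p) with 0 < p < 1 be independent of (X, Y), and let W := Z·X + (1 − Z)·Y. Then law(X) ≽_lr law(Y) (the monotone likelihood ratio property with law(X) dominating) holds if and only if there is a version of the conditional probability g(w) := Pr(Z = 1 | W = w) that is non-decreasing law(W)-almost surely. -/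
open MeasureTheory ProbabilityTheory Set

open scoped ENNReal

/-! Write `μ₀ = law X`, `μ₁ = law Y` and `fᵢ = dμᵢ/d(μ₀ + μ₁)`, so that `f₀ + f₁ = 1` a.e.
Independence of `Z` and `(X, Y)` gives `law W = p • μ₀ + (1 - p) • μ₁` and
`P(Z = 1, W ∈ s) = p μ₀(s)`, so Bayes' formula `p f₀ / (p f₀ + (1 - p) f₁)` is a version of
`Pr(Z = 1 | W = ·)`, and every version agrees with it `law W`-a.e. Since `f₀ + f₁ = 1`, both this
posterior and the likelihood ratio `f₀ / f₁` are strictly increasing functions of `f₀`, so each is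
monotone off a null set iff the other is; and `law W` has the same null sets as `μ₀ + μ₁`. -/

theorem ENNReal.div_le_div_iff_le_of_add_eq_one {a b c d : ℝ≥0∞} (hab : a + b = 1)
    (hcd : c + d = 1) : a / b ≤ c / d ↔ a ≤ c := by
  have hmono : StrictMonoOn (fun a : ℝ≥0∞ => a / (1 - a)) (Iic 1) := by
    intro a _ c hc hac
    have h1a : 1 - a ≠ 0 := (tsub_pos_of_lt (hac.trans_le hc)).ne'
    calc a / (1 - a) < c / (1 - a) := ENNReal.div_lt_div_right h1a (by simp) hac
      _ ≤ c / (1 - c) := ENNReal.div_le_div_left (tsub_le_tsub_left hac.le 1) c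
  have hb : b = 1 - a := ENNReal.eq_sub_of_add_eq' ENNReal.one_ne_top (by rwa [add_comm])
  have hd : d = 1 - c := ENNReal.eq_sub_of_add_eq' ENNReal.one_ne_top (by rwa [add_comm])
  rw [hb, hd]
  exact hmono.le_iff_le (hab ▸ le_self_add : a ≤ 1) (hcd ▸ le_self_add : c ≤ 1)

theorem mul_div_mul_add_mul_le_iff_of_add_eq_one {p q a b c d : ℝ} (hp : 0 < p) (hq : 0 < q)
    (ha : 0 ≤ a) (hb : 0 ≤ b) (hc : 0 ≤ c) (hd : 0 ≤ d) (hab : a + b = 1) (hcd : c + d = 1) :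
    p * a / (p * a + q * b) ≤ p * c / (p * c + q * d) ↔ a ≤ c := by
  obtain rfl : b = 1 - a := by linarith
  obtain rfl : d = 1 - c := by linarith
  have hpos : ∀ x, 0 ≤ x → 0 ≤ 1 - x → 0 < p * x + q * (1 - x) := fun x hx₀ hx₁ => by
    nlinarith [mul_pos hp hq, mul_nonneg (sq_nonneg p) hx₀, mul_nonneg (sq_nonneg q) hx₁]
  rw [div_le_div_iff₀ (hpos a ha hb) (hpos c hc hd)]
  have hpq : 0 < p * q := mul_pos hp hq
  constructor <;> intro h <;> nlinarith

theorem ENNReal.toReal_mul_div_mul_add_mul_le_iff_of_add_eq_one {p q a b c d : ℝ≥0∞}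
    (hp₀ : p ≠ 0) (hp : p ≠ ∞) (hq₀ : q ≠ 0) (hq : q ≠ ∞) (hab : a + b = 1) (hcd : c + d = 1) :
    (p * a / (p * a + q * b)).toReal ≤ (p * c / (p * c + q * d)).toReal ↔ a ≤ c := by
  have hfin : ∀ {x y : ℝ≥0∞}, x + y = 1 → x ≠ ∞ ∧ y ≠ ∞ := fun h =>
    ENNReal.add_ne_top.1 (h ▸ ENNReal.one_ne_top)
  have htoReal : ∀ {x y : ℝ≥0∞}, x + y = 1 → x.toReal + y.toReal = 1 := fun h => by
    rw [← ENNReal.toReal_add (hfin h).1 (hfin h).2, h, ENNReal.toReal_one]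
  simp only [ENNReal.toReal_div, ENNReal.toReal_mul, ENNReal.toReal_add
    (ENNReal.mul_ne_top hp (hfin hab).1) (ENNReal.mul_ne_top hq (hfin hab).2),
    ENNReal.toReal_add (ENNReal.mul_ne_top hp (hfin hcd).1) (ENNReal.mul_ne_top hq (hfin hcd).2)]
  rw [mul_div_mul_add_mul_le_iff_of_add_eq_one (ENNReal.toReal_pos hp₀ hp)
    (ENNReal.toReal_pos hq₀ hq) ENNReal.toReal_nonneg ENNReal.toReal_nonneg
    ENNReal.toReal_nonneg ENNReal.toReal_nonneg (htoReal hab) (htoReal hcd),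
    ENNReal.toReal_le_toReal (hfin hab).1 (hfin hcd).1]

section MonotoneOffNull

variable {α β γ : Type*} [MeasurableSpace α] [Preorder α] [Preorder β] [Preorder γ]

def MonotoneOffNull (μ : Measure α) (f : α → β) : Prop :=
  ∃ S : Set α, μ S = 0 ∧ ∀ x, x ∉ S → ∀ y, y ∉ S → x ≤ y → f x ≤ f y

variable {μ ν : Measure α} {f : α → β} {g : α → γ}

theorem MonotoneOffNull.of_absolutelyContinuous (h : MonotoneOffNull μ f) (hνμ : ν ≪ μ) :
    MonotoneOffNull ν f :=
  let ⟨S, hS, hf⟩ := h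
  ⟨S, hνμ hS, hf⟩

theorem monotoneOffNull_iff_of_absolutelyContinuous (hμν : μ ≪ ν) (hνμ : ν ≪ μ) :
    MonotoneOffNull μ f ↔ MonotoneOffNull ν f :=
  ⟨fun h => h.of_absolutelyContinuous hνμ, fun h => h.of_absolutelyContinuous hμν⟩

theorem MonotoneOffNull.of_ae_imp {q : α → Prop} (h : MonotoneOffNull μ f) (hq : ∀ᵐ x ∂μ, q x)
    (hfg : ∀ x y, q x → q y → f x ≤ f y → g x ≤ g y) : MonotoneOffNull μ g := by
  obtain ⟨S, hS, hf⟩ := h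
  refine ⟨S ∪ {x | ¬ q x}, measure_union_null hS (ae_iff.mp hq), fun x hx y hy hxy => ?_⟩
  simp only [mem_union, mem_ofPred_eq, not_or, not_not] at hx hy
  exact hfg x y hx.2 hy.2 (hf x hx.1 y hy.1 hxy)

theorem monotoneOffNull_congr {q : α → Prop} (hq : ∀ᵐ x ∂μ, q x)
    (hfg : ∀ x y, q x → q y → (f x ≤ f y ↔ g x ≤ g y)) :
    MonotoneOffNull μ f ↔ MonotoneOffNull μ g :=
  ⟨fun h => h.of_ae_imp hq fun x y hx hy => (hfg x y hx hy).1,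
    fun h => h.of_ae_imp hq fun x y hx hy => (hfg x y hx hy).2⟩

theorem MonotoneOffNull.congr_ae {g : α → β} (h : MonotoneOffNull μ f) (hfg : f =ᵐ[μ] g) :
    MonotoneOffNull μ g :=
  h.of_ae_imp hfg fun _ _ hx hy => hx ▸ hy ▸ id

theorem exists_setIntegral_eq_monotoneOffNull_iff [SigmaFinite μ] {c : Set α → ℝ} {G : α → ℝ}
    (hGm : Measurable G) (hGi : Integrable G μ)
    (hG : ∀ s, MeasurableSet s → c s = ∫ x in s, G x ∂μ) (hc : c univ ≠ 0) :
    (∃ g : α → ℝ, Measurable g ∧ (∀ s, MeasurableSet s → c s = ∫ x in s, g x ∂μ) ∧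
      MonotoneOffNull μ g) ↔ MonotoneOffNull μ G := by
  refine ⟨fun ⟨g, _, hg, hmono⟩ => ?_, fun h => ⟨G, hGm, hG, h⟩⟩
  -- `hc` rules out the junk value `∫ g = 0` of a non-integrable `g`
  have hgi : Integrable g μ :=
    .of_integral_ne_zero (by rwa [← setIntegral_univ, ← hg univ .univ])
  refine hmono.congr_ae (ae_eq_of_forall_setIntegral_eq_of_sigmaFinite
    (fun _ _ _ => hgi.integrableOn) (fun _ _ _ => hGi.integrableOn) fun s hs _ => ?_)
  rw [← hg s hs, hG s hs]

end MonotoneOffNull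

theorem setLIntegral_div_withDensity {α : Type*} [MeasurableSpace α] {ν : Measure α}
    {u w : α → ℝ≥0∞} (hu : Measurable u) (hw : Measurable w) (huw : ∀ x, u x ≤ w x)
    (hw_top : ∀ᵐ x ∂ν, w x ≠ ∞) {s : Set α} (hs : MeasurableSet s) :
    ∫⁻ x in s, u x / w x ∂ν.withDensity w = ∫⁻ x in s, u x ∂ν := by
  rw [setLIntegral_withDensity_eq_setLIntegral_mul _ hw (g := fun x => u x / w x) (hu.div hw) hs]
  refine lintegral_congr_ae (ae_restrict_of_ae ?_)
  filter_upwards [hw_top] with x hx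
  exact ENNReal.mul_div_cancel' (fun h => le_antisymm (h ▸ huw x) bot_le) (absurd · hx)

section Mixture

variable {α : Type*} [MeasurableSpace α]

/-- Bayes' formula for the posterior weight of the component `μ₀` in the mixture
`a • μ₀ + b • μ₁`. -/
noncomputable def mixturePosterior (a b : ℝ≥0∞) (μ₀ μ₁ : Measure α) (x : α) : ℝ≥0∞ :=
  a * μ₀.rnDeriv (μ₀ + μ₁) x / (a * μ₀.rnDeriv (μ₀ + μ₁) x + b * μ₁.rnDeriv (μ₀ + μ₁) x)

variable (μ₀ μ₁ : Measure α) {a b : ℝ≥0∞}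

theorem measurable_mixturePosterior : Measurable (mixturePosterior a b μ₀ μ₁) := by
  unfold mixturePosterior; fun_prop

theorem mixturePosterior_le_one (x : α) : mixturePosterior a b μ₀ μ₁ x ≤ 1 :=
  ENNReal.div_le_of_le_mul (by rw [one_mul]; exact le_self_add)

theorem rnDeriv_add_rnDeriv_eq_one [SigmaFinite μ₀] [SigmaFinite μ₁] :
    ∀ᵐ x ∂(μ₀ + μ₁), μ₀.rnDeriv (μ₀ + μ₁) x + μ₁.rnDeriv (μ₀ + μ₁) x = 1 := by
  filter_upwards [Measure.rnDeriv_add' μ₀ μ₁ (μ₀ + μ₁), Measure.rnDeriv_self (μ₀ + μ₁)]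
    with x hadd hself
  rw [← Pi.add_apply, ← hadd, hself]

theorem withDensity_smul_rnDeriv_add_smul_rnDeriv [SigmaFinite μ₀] [SigmaFinite μ₁]
    (a b : ℝ≥0∞) :
    (μ₀ + μ₁).withDensity (a • μ₀.rnDeriv (μ₀ + μ₁) + b • μ₁.rnDeriv (μ₀ + μ₁)) =
      a • μ₀ + b • μ₁ := by
  rw [withDensity_add_left ((Measure.measurable_rnDeriv _ _).const_smul a),
    withDensity_smul _ (Measure.measurable_rnDeriv _ _),
    withDensity_smul _ (Measure.measurable_rnDeriv _ _),
    Measure.withDensity_rnDeriv_eq _ _ (Measure.AbsolutelyContinuous.rfl.add_right μ₁),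
    Measure.withDensity_rnDeriv_eq _ _ (Measure.AbsolutelyContinuous.rfl.add_right' μ₀)]

theorem setLIntegral_mixturePosterior [SigmaFinite μ₀] [SigmaFinite μ₁]
    (ha : a ≠ ∞) (hb : b ≠ ∞) {s : Set α} (hs : MeasurableSet s) :
    ∫⁻ x in s, mixturePosterior a b μ₀ μ₁ x ∂(a • μ₀ + b • μ₁) = a * μ₀ s := by
  have hf₀ := Measure.measurable_rnDeriv μ₀ (μ₀ + μ₁)
  have hf₁ := Measure.measurable_rnDeriv μ₁ (μ₀ + μ₁)
  rw [← withDensity_smul_rnDeriv_add_smul_rnDeriv]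
  refine (setLIntegral_div_withDensity (hf₀.const_mul a)
    ((hf₀.const_smul a).add (hf₁.const_smul b)) (fun x => le_self_add) ?_ hs).trans ?_
  · filter_upwards [Measure.rnDeriv_ne_top μ₀ (μ₀ + μ₁), Measure.rnDeriv_ne_top μ₁ (μ₀ + μ₁)]
      with x h₀ h₁
    exact ENNReal.add_ne_top.2 ⟨ENNReal.mul_ne_top ha h₀, ENNReal.mul_ne_top hb h₁⟩
  · rw [lintegral_const_mul _ hf₀, ← withDensity_apply _ hs,
      Measure.withDensity_rnDeriv_eq _ _ (Measure.AbsolutelyContinuous.rfl.add_right μ₁)]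

theorem integral_toReal_mixturePosterior [SigmaFinite μ₀] [SigmaFinite μ₁]
    (ha : a ≠ ∞) (hb : b ≠ ∞) {s : Set α} (hs : MeasurableSet s) :
    ∫ x in s, (mixturePosterior a b μ₀ μ₁ x).toReal ∂(a • μ₀ + b • μ₁) = (a * μ₀ s).toReal := by
  rw [integral_toReal (measurable_mixturePosterior μ₀ μ₁).aemeasurable
    (ae_of_all _ fun x => (mixturePosterior_le_one μ₀ μ₁ x).trans_lt ENNReal.one_lt_top),
    setLIntegral_mixturePosterior μ₀ μ₁ ha hb hs]

theorem integrable_toReal_mixturePosterior [IsFiniteMeasure μ₀] [SigmaFinite μ₁]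
    (ha : a ≠ ∞) (hb : b ≠ ∞) :
    Integrable (fun x => (mixturePosterior a b μ₀ μ₁ x).toReal) (a • μ₀ + b • μ₁) := by
  refine integrable_toReal_of_lintegral_ne_top
    (measurable_mixturePosterior μ₀ μ₁).aemeasurable ?_
  rw [← setLIntegral_univ, setLIntegral_mixturePosterior μ₀ μ₁ ha hb .univ]
  exact ENNReal.mul_ne_top ha (measure_ne_top μ₀ univ)

theorem mlrp_iff_monotoneOffNull_mixturePosterior [LinearOrder α] [SigmaFinite μ₀]
    [SigmaFinite μ₁] (ha₀ : a ≠ 0) (ha : a ≠ ∞) (hb₀ : b ≠ 0) (hb : b ≠ ∞) :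
    MLRP μ₀ μ₁ ↔ MonotoneOffNull (μ₀ + μ₁) fun x => (mixturePosterior a b μ₀ μ₁ x).toReal :=
  (monotoneOffNull_congr (rnDeriv_add_rnDeriv_eq_one μ₀ μ₁) fun _ _ hx hy =>
    ENNReal.div_le_div_iff_le_of_add_eq_one hx hy).trans <|
  monotoneOffNull_congr (rnDeriv_add_rnDeriv_eq_one μ₀ μ₁) fun _ _ hx hy =>
    (ENNReal.toReal_mul_div_mul_add_mul_le_iff_of_add_eq_one ha₀ ha hb₀ hb hx hy).symm

end Mixture

section Bernoulli

variable {Ω : Type*} [MeasurableSpace Ω] {P : Measure Ω}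

theorem ProbabilityTheory.IndepFun.measure_inter_preimage_eq_mul_map {β γ δ : Type*}
    [MeasurableSpace β] [MeasurableSpace γ] [MeasurableSpace δ] {Z : Ω → β} {V : Ω → γ}
    (hind : IndepFun Z V P) (hV : Measurable V) {A : Set β} (hA : MeasurableSet A)
    {U : Ω → δ} {h : γ → δ} (hh : Measurable h) (hU : ∀ ω, Z ω ∈ A → U ω = h (V ω))
    {s : Set δ} (hs : MeasurableSet s) :
    P (Z ⁻¹' A ∩ U ⁻¹' s) = P (Z ⁻¹' A) * P.map (h ∘ V) s := by
  have hset : Z ⁻¹' A ∩ U ⁻¹' s = Z ⁻¹' A ∩ V ⁻¹' (h ⁻¹' s) := by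
    ext ω
    simp +contextual [hU ω]
  rw [hset, hind.measure_inter_preimage_eq_mul _ _ hA (hh hs), Measure.map_apply (hh.comp hV) hs,
    preimage_comp]

variable {X Y Z W : Ω → ℝ}

theorem measure_eq_one_inter_preimage_eq_mul_map (hX : Measurable X) (hY : Measurable Y)
    (hindep : IndepFun Z (fun ω => (X ω, Y ω)) P) (hW : ∀ ω, W ω = Z ω * X ω + (1 - Z ω) * Y ω)
    {s : Set ℝ} (hs : MeasurableSet s) :
    P ({ω | Z ω = 1} ∩ W ⁻¹' s) = P {ω | Z ω = 1} * P.map X s :=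
  hindep.measure_inter_preimage_eq_mul_map (hX.prodMk hY) (measurableSet_singleton 1)
    measurable_fst (fun ω (hz : Z ω = 1) => by simp [hW ω, hz]) hs

theorem measure_eq_zero_inter_preimage_eq_mul_map (hX : Measurable X) (hY : Measurable Y)
    (hindep : IndepFun Z (fun ω => (X ω, Y ω)) P) (hW : ∀ ω, W ω = Z ω * X ω + (1 - Z ω) * Y ω)
    {s : Set ℝ} (hs : MeasurableSet s) :
    P ({ω | Z ω = 0} ∩ W ⁻¹' s) = P {ω | Z ω = 0} * P.map Y s :=
  hindep.measure_inter_preimage_eq_mul_map (hX.prodMk hY) (measurableSet_singleton 0)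
    measurable_snd (fun ω (hz : Z ω = 0) => by simp [hW ω, hz]) hs

theorem map_eq_smul_map_add_smul_map (hX : Measurable X) (hY : Measurable Y) (hZ : Measurable Z)
    (hZval : ∀ ω, Z ω = 0 ∨ Z ω = 1) (hindep : IndepFun Z (fun ω => (X ω, Y ω)) P)
    (hW : ∀ ω, W ω = Z ω * X ω + (1 - Z ω) * Y ω) (hWm : Measurable W) :
    P.map W = P {ω | Z ω = 1} • P.map X + P {ω | Z ω = 0} • P.map Y := by
  ext s hs
  have hsplit : W ⁻¹' s = ({ω | Z ω = 1} ∩ W ⁻¹' s) ∪ ({ω | Z ω = 0} ∩ W ⁻¹' s) := by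
    ext ω
    rcases hZval ω with h | h <;> simp [h]
  have hdisj : Disjoint ({ω | Z ω = 1} ∩ W ⁻¹' s) ({ω | Z ω = 0} ∩ W ⁻¹' s) :=
    (disjoint_left.2 fun ω (h₁ : Z ω = 1) (h₀ : Z ω = 0) => one_ne_zero (h₁.symm.trans h₀)).mono
      inter_subset_left inter_subset_left
  rw [Measure.map_apply hWm hs, hsplit,
    measure_union hdisj ((hZ (measurableSet_singleton 0)).inter (hWm hs)),
    measure_eq_one_inter_preimage_eq_mul_map hX hY hindep hW hs,
    measure_eq_zero_inter_preimage_eq_mul_map hX hY hindep hW hs]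
  rfl

end Bernoulli

/-- **Lemma A.3, MLRP ⟺ MCP (monotone conditional probability).**
Let `X`, `Y` be real random variables, `Z ~ Bernoulli(p)` with `0 < p < 1` independent of
the pair `(X, Y)`, and `W := Z·X + (1 − Z)·Y`.  Then `law(X) ≽_lr law(Y)` iff there is a
version `g` of the conditional probability `w ↦ Pr(Z = 1 | W = w)` (i.e. a measurable `g`
with `Pr(Z = 1, W ∈ s) = ∫_s g d(law W)` for every Borel `s`) that is non-decreasing
`law(W)`-almost surely (non-decreasing off a `law(W)`-null set). -/
theorem mlrp_iff_monotoneConditionalProbability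
    {Ω : Type*} [MeasurableSpace Ω] (P : Measure Ω) [IsProbabilityMeasure P]
    (X Y Z W : Ω → ℝ) (hX : Measurable X) (hY : Measurable Y) (hZ : Measurable Z)
    (p : ℝ) (hp : p ∈ Ioo (0:ℝ) 1)
    (hZval : ∀ ω, Z ω = 0 ∨ Z ω = 1)
    (hZp : P {ω | Z ω = 1} = ENNReal.ofReal p)
    (hindep : IndepFun Z (fun ω => (X ω, Y ω)) P)
    (hW : ∀ ω, W ω = Z ω * X ω + (1 - Z ω) * Y ω) :
    MLRP (P.map X) (P.map Y) ↔
      ∃ g : ℝ → ℝ, Measurable g ∧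
        (∀ s : Set ℝ, MeasurableSet s →
          (P ({ω | Z ω = 1} ∩ {ω | W ω ∈ s})).toReal = ∫ w in s, g w ∂(P.map W)) ∧
        ∃ S : Set ℝ, (P.map W) S = 0 ∧
          ∀ x, x ∉ S → ∀ y, y ∉ S → x ≤ y → g x ≤ g y := by
  have hWm : Measurable W := by rw [funext hW]; fun_prop
  have := Measure.isProbabilityMeasure_map (μ := P) hWm.aemeasurable
  have hlaw := map_eq_smul_map_add_smul_map hX hY hZ hZval hindep hW hWm
  set a := P {ω | Z ω = 1}
  set b := P {ω | Z ω = 0}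
  have hab : a + b = 1 := by
    simpa [Measure.map_apply hX .univ, Measure.map_apply hY .univ] using
      (congr_arg (· univ) hlaw).symm
  have ha₀ : a ≠ 0 := by simpa [a, hZp] using hp.1
  have hb₀ : b ≠ 0 := fun hb => by
    rw [hb, add_zero, hZp, ENNReal.ofReal_eq_one] at hab
    exact hp.2.ne hab
  set G := fun w => (mixturePosterior a b (P.map X) (P.map Y) w).toReal
  have hversion : ∀ s, MeasurableSet s →
      (P ({ω | Z ω = 1} ∩ {ω | W ω ∈ s})).toReal = ∫ w in s, G w ∂(P.map W) := fun s hs => by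
    rw [hlaw, integral_toReal_mixturePosterior _ _ (measure_ne_top _ _) (measure_ne_top _ _) hs]
    exact congr_arg ENNReal.toReal (measure_eq_one_inter_preimage_eq_mul_map hX hY hindep hW hs)
  calc MLRP (P.map X) (P.map Y) ↔ MonotoneOffNull (P.map X + P.map Y) G :=
        mlrp_iff_monotoneOffNull_mixturePosterior _ _ ha₀ (measure_ne_top _ _) hb₀
          (measure_ne_top _ _)
    _ ↔ MonotoneOffNull (P.map W) G := by
        rw [hlaw]
        exact monotoneOffNull_iff_of_absolutelyContinuous
          ((Measure.absolutelyContinuous_smul ha₀).add (Measure.absolutelyContinuous_smul hb₀))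
          (Measure.smul_absolutelyContinuous.add Measure.smul_absolutelyContinuous)
    _ ↔ _ := (exists_setIntegral_eq_monotoneOffNull_iff
        (measurable_mixturePosterior _ _).ennreal_toReal
        (hlaw ▸ integrable_toReal_mixturePosterior _ _ (measure_ne_top _ _) (measure_ne_top _ _))
        hversion (by simpa using (ENNReal.toReal_pos ha₀ (measure_ne_top P _)).ne')).symm
end
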